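/- Let n ≥ 2 and let G be a group of order 2^n · 3 (so |G| > 6). Then G contains a normal subgroup of order 2 or a normal subgroup of order 4. -/
import Mathlib

section Aux

variable {G : Type*} [Group G]

private lemma conj_flip {g x y : G} (h : g * x * g⁻¹ = y) : g⁻¹ * y * g = x := by
  rw [← h]; group

private lemma conj_eq_one {g x : G} (h : g * x * g⁻¹ = 1) : x = 1 := by
  have : x = g⁻¹ * (g * x * g⁻¹) * g := by group
  rw [this, h]; group


private def quadSubgroup (u w : G) (huu : u*u = 1) (hww : w*w = 1)
    (hcomm : u*w = w*u) : Subgroup G where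
  carrier := {1, u, w, u*w}
  one_mem' := Or.inl rfl
  mul_mem' := by
    have p1 : u*(u*w) = w := by rw [← mul_assoc, huu, one_mul]
    have p2 : w*(u*w) = u := by rw [← mul_assoc, ← hcomm, mul_assoc, hww, mul_one]
    have p3 : (u*w)*u = w := by rw [mul_assoc, ← hcomm, ← mul_assoc, huu, one_mul]
    have p4 : (u*w)*w = u := by rw [mul_assoc, hww, mul_one]
    have p5 : (u*w)*(u*w) = 1 := by rw [mul_assoc, p2, huu]
    rintro a b ha hb
    simp only [Set.mem_insert_iff, Set.mem_singleton_iff] at ha hb ⊢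
    rcases ha with rfl|rfl|rfl|rfl <;> rcases hb with rfl|rfl|rfl|rfl <;>
      simp only [one_mul, mul_one, huu, hww, p1, p2, p3, p4, p5, ← hcomm] <;> simp
  inv_mem' := by
    have p2 : w*(u*w) = u := by rw [← mul_assoc, ← hcomm, mul_assoc, hww, mul_one]
    have p5 : (u*w)*(u*w) = 1 := by rw [mul_assoc, p2, huu]
    rintro a ha
    simp only [Set.mem_insert_iff, Set.mem_singleton_iff] at ha ⊢
    rcases ha with rfl|rfl|rfl|rfl <;>
      simp only [inv_one, inv_eq_of_mul_eq_one_right huu,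
        inv_eq_of_mul_eq_one_right hww, inv_eq_of_mul_eq_one_right p5] <;> simp

private lemma mem_quadSubgroup_iff {u w : G} {huu : u*u = 1} {hww : w*w = 1}
    {hcomm : u*w = w*u} (y : G) :
    y ∈ quadSubgroup u w huu hww hcomm ↔ (y = 1 ∨ y = u ∨ y = w ∨ y = u*w) := by
  show y ∈ ({1, u, w, u*w} : Set G) ↔ _
  simp [Set.mem_insert_iff]

private lemma card_quadSubgroup {u w : G} {huu : u*u = 1} {hww : w*w = 1}
    {hcomm : u*w = w*u} (h1 : u ≠ 1) (h2 : w ≠ 1) (h3 : u ≠ w) (h4 : u*w ≠ 1)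
    (h5 : u ≠ u*w) (h6 : w ≠ u*w) :
    Nat.card (quadSubgroup u w huu hww hcomm) = 4 := by
  have hcoe : ((quadSubgroup u w huu hww hcomm : Subgroup G) : Set G) = {1, u, w, u*w} := rfl
  rw [← SetLike.coe_sort_coe, hcoe, Nat.card_coe_set_eq]
  rw [Set.ncard_insert_of_notMem (by
    simp only [Set.mem_insert_iff, Set.mem_singleton_iff]
    push_neg
    exact ⟨Ne.symm h1, Ne.symm h2, Ne.symm h4⟩) (Set.toFinite _)]
  rw [Set.ncard_insert_of_notMem (by
    simp only [Set.mem_insert_iff, Set.mem_singleton_iff]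
    push_neg
    exact ⟨h3, h5⟩) (Set.toFinite _)]
  rw [Set.ncard_pair h6]

private lemma dvd_two_of_dvd_six (d : ℕ) (h : d ∣ 6) (h3 : ¬ 3 ∣ d) : d ∣ 2 := by
  have hd : d ≤ 6 := Nat.le_of_dvd (by norm_num) h
  interval_cases d <;> revert h h3 <;> decide

private lemma dvd_three_of_dvd_six (d : ℕ) (h : d ∣ 6) (h2 : ¬ 2 ∣ d) : d ∣ 3 := by
  have hd : d ≤ 6 := Nat.le_of_dvd (by norm_num) h
  interval_cases d <;> revert h h2 <;> decide

/-- Any group of order dividing 6 is generated by an element `t` with `t ^ 3 = 1` and an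
element `s` with `s ^ 2 = 1`, with `s * t * s⁻¹ ∈ {t, t²}`. -/
private lemma aux_gen (Q : Type*) [Group Q] [Finite Q] (hQ : Nat.card Q ∣ 6) :
    ∃ t s : Q, t ^ 3 = 1 ∧ s ^ 2 = 1 ∧ (s * t * s⁻¹ = t ∨ s * t * s⁻¹ = t * t) ∧
      ∀ q : Q, q ∈ Subgroup.closure ({t, s} : Set Q) := by
  haveI hf2 : Fact (Nat.Prime 2) := ⟨Nat.prime_two⟩
  haveI hf3 : Fact (Nat.Prime 3) := ⟨by norm_num⟩
  obtain ⟨T⟩ : Nonempty (Sylow 3 Q) := inferInstance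
  obtain ⟨S⟩ : Nonempty (Sylow 2 Q) := inferInstance
  have hTi : (T : Subgroup Q).index ∣ 2 :=
    dvd_two_of_dvd_six _ ((Subgroup.index_dvd_card _).trans hQ) T.not_dvd_index
  have hSi : (S : Subgroup Q).index ∣ 3 :=
    dvd_three_of_dvd_six _ ((Subgroup.index_dvd_card _).trans hQ) S.not_dvd_index
  have hTc : Nat.card (T : Subgroup Q) = 1 ∨ Nat.card (T : Subgroup Q) = 3 := by
    obtain ⟨k, hk⟩ := IsPGroup.iff_card.mp T.isPGroup'
    have hdvd : (3 : ℕ) ^ k ∣ 6 := hk ▸ ((Subgroup.card_subgroup_dvd_card _).trans hQ)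
    rcases k with _ | _ | k
    · left; simpa using hk
    · right; simpa using hk
    · exfalso
      have h9 : (9 : ℕ) ∣ 6 := dvd_trans ⟨3 ^ k, by ring⟩ hdvd
      norm_num at h9
  have hSc : Nat.card (S : Subgroup Q) = 1 ∨ Nat.card (S : Subgroup Q) = 2 := by
    obtain ⟨k, hk⟩ := IsPGroup.iff_card.mp S.isPGroup'
    have hdvd : (2 : ℕ) ^ k ∣ 6 := hk ▸ ((Subgroup.card_subgroup_dvd_card _).trans hQ)
    rcases k with _ | _ | k
    · left; simpa using hk
    · right; simpa using hk
    · exfalso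
      have h4 : (4 : ℕ) ∣ 6 := dvd_trans ⟨2 ^ k, by ring⟩ hdvd
      norm_num at h4
  -- a generator for T, whose conjugates stay in `zpowers t`
  obtain ⟨t, htT, ht3, htgen, htconj⟩ :
      ∃ t : Q, t ∈ (T : Subgroup Q) ∧ t ^ 3 = 1 ∧
        (∀ x ∈ (T : Subgroup Q), x ∈ Subgroup.zpowers t) ∧
        (∀ s' : Q, s' * t * s'⁻¹ ∈ Subgroup.zpowers t) := by
    rcases hTc with h1 | h3
    · refine ⟨1, Subgroup.one_mem _, one_pow 3, ?_, ?_⟩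
      · intro x hx
        have : (T : Subgroup Q) = ⊥ := Subgroup.card_eq_one.mp h1
        rw [this, Subgroup.mem_bot] at hx
        rw [hx]
        exact Subgroup.one_mem _
      · intro s'
        have : s' * 1 * s'⁻¹ = 1 := by group
        rw [this]; exact Subgroup.one_mem _
    · -- T normal since the number of 3-Sylows is 1
      have hsyl : Nat.card (Sylow 3 Q) = 1 := by
        have hdvd : Nat.card (Sylow 3 Q) ∣ (T : Subgroup Q).index := T.card_dvd_index
        have hle : Nat.card (Sylow 3 Q) ≤ 2 := Nat.le_of_dvd (by norm_num) (hdvd.trans hTi)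
        have hpos : 0 < Nat.card (Sylow 3 Q) := Nat.card_pos
        have hmod := card_sylow_modEq_one 3 Q
        unfold Nat.ModEq at hmod
        omega
      haveI : Subsingleton (Sylow 3 Q) := ((Nat.card_eq_one_iff_unique).mp hsyl).1
      have hTn : (T : Subgroup Q).Normal := by
        rw [← Subgroup.normalizer_eq_top_iff, Subgroup.eq_top_iff']
        intro g
        exact Sylow.smul_eq_iff_mem_normalizer.mp (Subsingleton.elim _ _)
      haveI : IsCyclic (T : Subgroup Q) := isCyclic_of_prime_card h3
      obtain ⟨g, hg⟩ := IsCyclic.exists_generator (α := (T : Subgroup Q))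
      refine ⟨(g : Q), g.2, ?_, ?_, ?_⟩
      · have := pow_card_eq_one' (G := (T : Subgroup Q)) (x := g)
        rw [h3] at this
        simpa using congrArg (Subtype.val) this
      · intro x hx
        obtain ⟨k, hk⟩ := hg ⟨x, hx⟩
        exact Subgroup.mem_zpowers_iff.mpr ⟨k, by simpa using congrArg (Subtype.val) hk⟩
      · intro s'
        have hmem : s' * (g : Q) * s'⁻¹ ∈ (T : Subgroup Q) := hTn.conj_mem _ g.2 s'
        obtain ⟨k, hk⟩ := hg ⟨_, hmem⟩
        exact Subgroup.mem_zpowers_iff.mpr ⟨k, by simpa using congrArg (Subtype.val) hk⟩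
  obtain ⟨s, hsS, hs2, hsgen⟩ :
      ∃ s : Q, s ∈ (S : Subgroup Q) ∧ s ^ 2 = 1 ∧
        ∀ x ∈ (S : Subgroup Q), x ∈ Subgroup.zpowers s := by
    rcases hSc with h1 | h2
    · refine ⟨1, Subgroup.one_mem _, one_pow 2, ?_⟩
      intro x hx
      have : (S : Subgroup Q) = ⊥ := Subgroup.card_eq_one.mp h1
      rw [this, Subgroup.mem_bot] at hx
      rw [hx]
      exact Subgroup.one_mem _
    · haveI : IsCyclic (S : Subgroup Q) := isCyclic_of_prime_card h2
      obtain ⟨g, hg⟩ := IsCyclic.exists_generator (α := (S : Subgroup Q))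
      refine ⟨(g : Q), g.2, ?_, ?_⟩
      · have := pow_card_eq_one' (G := (S : Subgroup Q)) (x := g)
        rw [h2] at this
        simpa using congrArg (Subtype.val) this
      · intro x hx
        obtain ⟨k, hk⟩ := hg ⟨x, hx⟩
        exact Subgroup.mem_zpowers_iff.mpr ⟨k, by simpa using congrArg (Subtype.val) hk⟩
  refine ⟨t, s, ht3, hs2, ?_, ?_⟩
  · -- conjugation relation
    have hmemz := htconj s
    rw [Subgroup.mem_zpowers_iff] at hmemz
    obtain ⟨k, hk⟩ := hmemz
    have ht3z : t ^ (3 : ℤ) = 1 := by exact_mod_cast ht3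
    have hred : t ^ k = t ^ (k % 3) := by
      conv_lhs => rw [← Int.mul_ediv_add_emod k 3]
      rw [zpow_add, zpow_mul, ht3z, one_zpow, one_mul]
    rw [hred] at hk
    have h0 : 0 ≤ k % 3 := Int.emod_nonneg k (by norm_num)
    have h3' : k % 3 < 3 := Int.emod_lt_of_pos k (by norm_num)
    interval_cases h : (k % 3)
    · left
      have h1 : s * t * s⁻¹ = 1 := by simpa using hk.symm
      have : t = 1 := conj_eq_one h1
      rw [this] at h1 ⊢; exact h1
    · left; simpa using hk.symm
    · right
      rw [← hk]
      rw [show (2:ℤ) = (2:ℕ) by norm_num, zpow_natCast, pow_two]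
  · -- generation
    have hTle : (T : Subgroup Q) ≤ Subgroup.closure {t, s} := by
      intro x hx
      obtain ⟨k, hk⟩ := Subgroup.mem_zpowers_iff.mp (htgen x hx)
      exact hk ▸ zpow_mem (Subgroup.subset_closure (by simp)) k
    have hSle : (S : Subgroup Q) ≤ Subgroup.closure {t, s} := by
      intro x hx
      obtain ⟨k, hk⟩ := Subgroup.mem_zpowers_iff.mp (hsgen x hx)
      exact hk ▸ zpow_mem (Subgroup.subset_closure (by simp)) k
    have hidx : (Subgroup.closure ({t, s} : Set Q)).index = 1 := by
      have h1 : (Subgroup.closure ({t, s} : Set Q)).index ∣ 2 :=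
        (Subgroup.index_dvd_of_le hTle).trans hTi
      have h2 : (Subgroup.closure ({t, s} : Set Q)).index ∣ 3 :=
        (Subgroup.index_dvd_of_le hSle).trans hSi
      have h12 := Nat.dvd_gcd h1 h2
      rw [show Nat.gcd 2 3 = 1 from rfl] at h12
      exact Nat.dvd_one.mp h12
    intro q
    rw [Subgroup.index_eq_one] at hidx
    rw [hidx]
    trivial

end Aux

section Main

variable {G : Type*} [Group G]

set_option maxHeartbeats 4000000 in
private lemma aux_main [Finite G] (K : Subgroup G) (hKn : K.Normal)
    (hKnt : Nat.card K ≠ 1) (hK2 : ∃ m, Nat.card K = 2 ^ m) (hKi : K.index ∣ 6) :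
    ∃ H : Subgroup G, H.Normal ∧ (Nat.card H = 2 ∨ Nat.card H = 4) := by
  classical
  haveI hf2 : Fact (Nat.Prime 2) := ⟨Nat.prime_two⟩
  -- V = Ω₁(Z(K)) as a subset of G
  set Vc : Set G := {x : G | x ∈ K ∧ x * x = 1 ∧ ∀ k ∈ K, x * k = k * x} with hVcdef
  have hVmul : ∀ {a b : G}, a ∈ Vc → b ∈ Vc → a * b ∈ Vc := by
    rintro a b ⟨haK, ha2, haC⟩ ⟨hbK, hb2, hbC⟩
    refine ⟨K.mul_mem haK hbK, ?_, ?_⟩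
    · calc a*b*(a*b) = a*(b*a)*b := by group
        _ = a*(a*b)*b := by rw [← haC b hbK]
        _ = (a*a)*(b*b) := by group
        _ = 1 := by rw [ha2, hb2, one_mul]
    · intro k hk
      calc a*b*k = a*(b*k) := by group
        _ = a*(k*b) := by rw [hbC k hk]
        _ = (a*k)*b := by group
        _ = (k*a)*b := by rw [haC k hk]
        _ = k*(a*b) := by group
  have hVconj : ∀ (g : G), ∀ x ∈ Vc, g*x*g⁻¹ ∈ Vc := by
    rintro g x ⟨hxK, hx2, hxC⟩
    refine ⟨hKn.conj_mem x hxK g, ?_, ?_⟩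
    · calc (g*x*g⁻¹)*(g*x*g⁻¹) = g*(x*x)*g⁻¹ := by group
        _ = 1 := by rw [hx2]; group
    · intro k hk
      have hk' : g⁻¹*k*(g⁻¹)⁻¹ ∈ K := hKn.conj_mem k hk g⁻¹
      rw [inv_inv] at hk'
      have h1 : x*(g⁻¹*k*g) = (g⁻¹*k*g)*x := hxC _ hk'
      calc g*x*g⁻¹*k = g*(x*(g⁻¹*k*g))*g⁻¹ := by group
        _ = g*((g⁻¹*k*g)*x)*g⁻¹ := by rw [h1]
        _ = k*(g*x*g⁻¹) := by group
  have hVcomm : ∀ x ∈ Vc, ∀ y ∈ Vc, x*y = y*x := fun x hx y hy => hx.2.2 y hy.1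
  -- an element of order 2 in the center of K
  obtain ⟨m, hKcard⟩ := hK2
  have hp2 : IsPGroup 2 K := IsPGroup.of_card hKcard
  haveI : Nontrivial K := by
    apply Finite.one_lt_card_iff_nontrivial.mp
    have : 0 < Nat.card K := Nat.card_pos
    omega
  haveI := IsPGroup.center_nontrivial hp2
  have h2Z : 2 ∣ Nat.card (Subgroup.center K) := by
    have hZdvd : Nat.card (Subgroup.center K) ∣ Nat.card K :=
      Subgroup.card_subgroup_dvd_card _
    obtain ⟨j, hjm, hj⟩ := (Nat.dvd_prime_pow Nat.prime_two).mp (hKcard ▸ hZdvd)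
    rcases j with _ | j
    · exfalso
      have h1 := Finite.one_lt_card (α := Subgroup.center K)
      rw [pow_zero] at hj
      rw [hj] at h1
      norm_num at h1
    · rw [hj]
      exact dvd_pow_self 2 j.succ_ne_zero
  obtain ⟨x, hx⟩ := exists_prime_orderOf_dvd_card' (G := Subgroup.center K) 2 (by simpa using h2Z)
  set v : G := ((x : K) : G) with hvdef
  have hvV : v ∈ Vc := by
    refine ⟨(x : K).2, ?_, ?_⟩
    · have h1 : x * x = 1 := by
        have := pow_orderOf_eq_one x
        rwa [hx, pow_two] at this
      have := congrArg (fun y : (Subgroup.center K) => (((y : K)) : G)) h1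
      simpa using this
    · intro k hk
      have h1 := (Subgroup.mem_center_iff.mp x.2) ⟨k, hk⟩
      have := congrArg (fun y : K => (y : G)) h1
      simpa using this.symm
  have hv1 : v ≠ 1 := by
    intro h
    have hx1 : x = 1 := Subtype.ext (Subtype.ext h)
    rw [hx1] at hx
    simp at hx
  -- the centralizer of V
  set C : Subgroup G := Subgroup.centralizer Vc with hCdef
  have hKC : K ≤ C := fun k hk => Subgroup.mem_centralizer_iff.mpr (fun y hy => hy.2.2 k hk)
  have hCfix : ∀ c ∈ C, ∀ x ∈ Vc, c * x * c⁻¹ = x := by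
    intro c hc y hy
    have h1 := (Subgroup.mem_centralizer_iff.mp hc) y hy
    rw [← h1]; group
  have hCnormal : C.Normal := by
    constructor
    intro c hc g
    apply Subgroup.mem_centralizer_iff.mpr
    intro y hy
    have hy' : g⁻¹*y*(g⁻¹)⁻¹ ∈ Vc := hVconj g⁻¹ y hy
    rw [inv_inv] at hy'
    have h1 : (g⁻¹*y*g) * c = c * (g⁻¹*y*g) := (Subgroup.mem_centralizer_iff.mp hc) _ hy'
    calc y * (g*c*g⁻¹) = g * ((g⁻¹*y*g) * c) * g⁻¹ := by group
      _ = g * (c * (g⁻¹*y*g)) * g⁻¹ := by rw [h1]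
      _ = (g*c*g⁻¹) * y := by group
  haveI := hCnormal
  have hCi : Nat.card (G ⧸ C) ∣ 6 := by
    rw [← Subgroup.index_eq_card]
    exact (Subgroup.index_dvd_of_le hKC).trans hKi
  obtain ⟨tb, sb, ht3b, hs2b, hrelb, hgenb⟩ := aux_gen (G ⧸ C) hCi
  obtain ⟨t, rfl⟩ := QuotientGroup.mk_surjective tb
  obtain ⟨s, rfl⟩ := QuotientGroup.mk_surjective sb
  have ht3 : t^3 ∈ C := by
    rw [← QuotientGroup.eq_one_iff]
    simpa using ht3b
  have hs2 : s^2 ∈ C := by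
    rw [← QuotientGroup.eq_one_iff]
    simpa using hs2b
  have hrel : (s*t*s⁻¹*t⁻¹ ∈ C) ∨ (s*t*s⁻¹*(t*t)⁻¹ ∈ C) := by
    rcases hrelb with h | h
    · left
      rw [← QuotientGroup.eq_one_iff]
      have e : ((s*t*s⁻¹*t⁻¹ : G) : G ⧸ C)
          = ((s : G ⧸ C) * (t : G ⧸ C) * (s : G ⧸ C)⁻¹) * ((t : G ⧸ C))⁻¹ := rfl
      rw [e, h]
      simp
    · right
      rw [← QuotientGroup.eq_one_iff]
      have e : ((s*t*s⁻¹*(t*t)⁻¹ : G) : G ⧸ C)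
          = ((s : G ⧸ C) * (t : G ⧸ C) * (s : G ⧸ C)⁻¹) * (((t : G ⧸ C)) * (t : G ⧸ C))⁻¹ := rfl
      rw [e, h]
      group
  have hfix_t3 : ∀ y ∈ Vc, (t^3)*y*(t^3)⁻¹ = y := fun y hy => hCfix _ ht3 y hy
  have hfix_s2 : ∀ y ∈ Vc, (s^2)*y*(s^2)⁻¹ = y := fun y hy => hCfix _ hs2 y hy
  -- generation of G by t, s and C
  have hgen : ∀ g : G, g ∈ Subgroup.closure ({t, s} ∪ (C : Set G)) := by
    intro g
    have h1 : (g : G ⧸ C) ∈ Subgroup.closure {(t : G ⧸ C), (s : G ⧸ C)} := hgenb _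
    have himg : ({(t : G⧸C), (s : G⧸C)} : Set (G⧸C)) = (QuotientGroup.mk' C) '' {t, s} := by
      simp [Set.image_insert_eq]
    rw [himg, ← MonoidHom.map_closure] at h1
    obtain ⟨h, hh, hhg⟩ := Subgroup.mem_map.mp h1
    have hC' : h⁻¹ * g ∈ C := by
      rw [← QuotientGroup.eq_one_iff]
      have e : ((h⁻¹ * g : G) : G ⧸ C) = ((h : G ⧸ C))⁻¹ * (g : G ⧸ C) := rfl
      have e2 : ((h : G ⧸ C)) = ((g : G ⧸ C)) := by simpa using hhg
      rw [e, e2]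
      simp
    have hmem : h ∈ Subgroup.closure ({t,s} ∪ (C:Set G)) :=
      Subgroup.closure_mono Set.subset_union_left hh
    have hmem2 : h⁻¹*g ∈ Subgroup.closure ({t,s} ∪ (C:Set G)) :=
      Subgroup.subset_closure (Set.mem_union_right _ hC')
    have := mul_mem hmem hmem2
    simpa using this
  -- construct u with s*u*s⁻¹ = u
  obtain ⟨u, huV, hu1, hus⟩ : ∃ u, u ∈ Vc ∧ u ≠ 1 ∧ s*u*s⁻¹ = u := by
    by_cases hsv : s*v*s⁻¹ = v
    · exact ⟨v, hvV, hv1, hsv⟩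
    · refine ⟨v * (s*v*s⁻¹), hVmul hvV (hVconj s v hvV), ?_, ?_⟩
      · intro h
        exact hsv ((eq_inv_of_mul_eq_one_right h).trans (inv_eq_of_mul_eq_one_right hvV.2.1))
      · have hcomm : v * (s*v*s⁻¹) = (s*v*s⁻¹) * v :=
          hVcomm v hvV _ (hVconj s v hvV)
        calc s*(v*(s*v*s⁻¹))*s⁻¹ = (s*v*s⁻¹) * ((s^2)*v*(s^2)⁻¹) := by group
          _ = (s*v*s⁻¹) * v := by rw [hfix_s2 v hvV]
          _ = v*(s*v*s⁻¹) := hcomm.symm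
  set w : G := t*u*t⁻¹ with hw
  set w2 : G := t*w*t⁻¹ with hw2
  have hwV : w ∈ Vc := hVconj t u huV
  have hw2V : w2 ∈ Vc := hVconj t w hwV
  have hp3 : t^3 = t*t*t := by rw [pow_succ, pow_two]
  have htw2 : t*w2*t⁻¹ = u := by
    have e : t*w2*t⁻¹ = (t^3)*u*(t^3)⁻¹ := by rw [hw2, hw, hp3]; group
    rw [e]
    exact hfix_t3 u huV
  have hsw : (s*w*s⁻¹ = w ∧ s*w2*s⁻¹ = w2) ∨ (s*w*s⁻¹ = w2 ∧ s*w2*s⁻¹ = w) := by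
    rcases hrel with hc | hc
    · left
      have e1 : s*w*s⁻¹ = (s*t*s⁻¹*t⁻¹)*(t*(s*u*s⁻¹)*t⁻¹)*(s*t*s⁻¹*t⁻¹)⁻¹ := by
        rw [hw]; group
      rw [hus, ← hw] at e1
      have hsw1 : s*w*s⁻¹ = w := by rw [e1]; exact hCfix _ hc w hwV
      refine ⟨hsw1, ?_⟩
      have e2 : s*w2*s⁻¹ = (s*t*s⁻¹*t⁻¹)*(t*(s*w*s⁻¹)*t⁻¹)*(s*t*s⁻¹*t⁻¹)⁻¹ := by
        rw [hw2]; group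
      rw [hsw1, ← hw2] at e2
      rw [e2]
      exact hCfix _ hc w2 hw2V
    · right
      have e1 : s*w*s⁻¹ = (s*t*s⁻¹*(t*t)⁻¹)*(t*(t*(s*u*s⁻¹)*t⁻¹)*t⁻¹)*(s*t*s⁻¹*(t*t)⁻¹)⁻¹ := by
        rw [hw]; group
      rw [hus, ← hw, ← hw2] at e1
      have hsw1 : s*w*s⁻¹ = w2 := by rw [e1]; exact hCfix _ hc w2 hw2V
      refine ⟨hsw1, ?_⟩
      have e2 : s*w2*s⁻¹ = (s*t*s⁻¹*(t*t)⁻¹)*(t*(t*(s*w*s⁻¹)*t⁻¹)*t⁻¹)*(s*t*s⁻¹*(t*t)⁻¹)⁻¹ := by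
        rw [hw2]; group
      rw [hsw1, htw2, ← hw] at e2
      rw [e2]
      exact hCfix _ hc w hwV
  set z : G := u*w*w2 with hz
  have hzV : z ∈ Vc := hVmul (hVmul huV hwV) hw2V
  have htz : t*z*t⁻¹ = z := by
    have e : t*z*t⁻¹ = (t*u*t⁻¹)*(t*w*t⁻¹)*(t*w2*t⁻¹) := by rw [hz]; group
    rw [htw2, ← hw, ← hw2] at e
    rw [e, hz]
    have h1 := hVcomm _ (hVmul hwV hw2V) u huV
    calc w*w2*u = (w*w2)*u := by group
      _ = u*(w*w2) := h1
      _ = u*w*w2 := by group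
  have hsz : s*z*s⁻¹ = z := by
    have e : s*z*s⁻¹ = (s*u*s⁻¹)*(s*w*s⁻¹)*(s*w2*s⁻¹) := by rw [hz]; group
    rcases hsw with ⟨h1, h2⟩ | ⟨h1, h2⟩
    · rw [hus, h1, h2] at e
      rw [e, hz]
    · rw [hus, h1, h2] at e
      rw [e, hz]
      have h3 := hVcomm w2 hw2V w hwV
      rw [mul_assoc, h3, ← mul_assoc]
  have hcz : ∀ c ∈ C, c*z*c⁻¹ = z := fun c hc => hCfix c hc z hzV
  rcases eq_or_ne z 1 with hz1 | hz1
  · -- z = 1 : normal subgroup of order 4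
    have hwu : w ≠ u := by
      intro h
      have hww2 : w2 = w := by rw [hw2, h, ← hw]; exact h
      apply hu1
      have hzu : z = u := by
        rw [hz, h, hww2, h, huV.2.1, one_mul]
      rw [← hzu, hz1]
    have hw2uw : w2 = u*w := by
      have h1 : (u*w)*w2 = 1 := by
        have : u*w*w2 = 1 := by rw [← hz]; exact hz1
        rw [← this]
      have h3 : (u*w)*(u*w) = 1 := (hVmul huV hwV).2.1
      rw [(inv_eq_of_mul_eq_one_right h1).symm, inv_eq_of_mul_eq_one_right h3]
    have huu : u*u = 1 := huV.2.1
    have hww : w*w = 1 := hwV.2.1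
    have hcomm_uw : u*w = w*u := hVcomm u huV w hwV
    have p1 : u*(u*w) = w := by rw [← mul_assoc, huu, one_mul]
    have p2 : w*(u*w) = u := by rw [← mul_assoc, ← hcomm_uw, mul_assoc, hww, mul_one]
    have p3 : (u*w)*u = w := by rw [mul_assoc, ← hcomm_uw, ← mul_assoc, huu, one_mul]
    have p4 : (u*w)*w = u := by rw [mul_assoc, hww, mul_one]
    have p5 : (u*w)*(u*w) = 1 := (hVmul huV hwV).2.1
    have hwne : w ≠ 1 := by
      intro h
      exact hu1 (conj_eq_one (hw.symm.trans h))
    have huw_ne1 : u*w ≠ 1 := by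
      intro h
      exact hwu ((eq_inv_of_mul_eq_one_right h).trans
        (inv_eq_of_mul_eq_one_right huu))
    have hu_uw : u ≠ u*w := by
      intro h
      apply hwne
      have := mul_left_cancel (a := u) (b := (1:G)) (c := w) (by rw [mul_one]; exact h)
      exact this.symm
    have hw_uw : w ≠ u*w := by
      intro h
      apply hu1
      have := mul_right_cancel (a := (1:G)) (b := w) (c := u) (by rw [one_mul]; exact h)
      exact this.symm
    -- conjugation equalities
    have ht_u : t*u*t⁻¹ = w := hw.symm
    have ht_w : t*w*t⁻¹ = u*w := by rw [← hw2uw]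
    have ht_uw : t*(u*w)*t⁻¹ = u := by
      have e : t*(u*w)*t⁻¹ = (t*u*t⁻¹)*(t*w*t⁻¹) := by group
      rw [ht_u, ht_w] at e
      rw [e]
      exact p2
    have hti_u : t⁻¹*u*t = u*w := conj_flip ht_uw
    have hti_w : t⁻¹*w*t = u := conj_flip ht_u
    have hti_uw : t⁻¹*(u*w)*t = w := conj_flip ht_w
    have hs_w : s*w*s⁻¹ = w ∨ s*w*s⁻¹ = u*w := by
      rcases hsw with ⟨h1, _⟩ | ⟨h1, _⟩
      · exact Or.inl h1
      · exact Or.inr (by rw [h1, hw2uw])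
    have hs_uw : (s*w*s⁻¹ = w ∧ s*(u*w)*s⁻¹ = u*w) ∨ (s*w*s⁻¹ = u*w ∧ s*(u*w)*s⁻¹ = w) := by
      have e : s*(u*w)*s⁻¹ = (s*u*s⁻¹)*(s*w*s⁻¹) := by group
      rw [hus] at e
      rcases hs_w with h1 | h1
      · left
        exact ⟨h1, by rw [e, h1]⟩
      · right
        refine ⟨h1, ?_⟩
        rw [e, h1]
        exact p1
    -- the subset S₀ = {u, w, u*w} is invariant under conjugation
    have key : ∀ g : G, ∀ y, (y = u ∨ y = w ∨ y = u*w) →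
        ((g*y*g⁻¹ = u ∨ g*y*g⁻¹ = w ∨ g*y*g⁻¹ = u*w) ∧
         (g⁻¹*y*g = u ∨ g⁻¹*y*g = w ∨ g⁻¹*y*g = u*w)) := by
      intro g
      induction hgen g using Subgroup.closure_induction with
      | mem a ha =>
        rcases ha with ha | haC
        · have ha' : a = t ∨ a = s := by simpa using ha
          rcases ha' with rfl | rfl
          · rintro y (rfl | rfl | rfl)
            · exact ⟨Or.inr (Or.inl ht_u), Or.inr (Or.inr hti_u)⟩
            · exact ⟨Or.inr (Or.inr ht_w), Or.inl hti_w⟩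
            · exact ⟨Or.inl ht_uw, Or.inr (Or.inl hti_uw)⟩
          · rcases hs_uw with ⟨h1, h2⟩ | ⟨h1, h2⟩
            · rintro y (rfl | rfl | rfl)
              · exact ⟨Or.inl hus, Or.inl (conj_flip hus)⟩
              · exact ⟨Or.inr (Or.inl h1), Or.inr (Or.inl (conj_flip h1))⟩
              · exact ⟨Or.inr (Or.inr h2), Or.inr (Or.inr (conj_flip h2))⟩
            · rintro y (rfl | rfl | rfl)
              · exact ⟨Or.inl hus, Or.inl (conj_flip hus)⟩
              · exact ⟨Or.inr (Or.inr h1), Or.inr (Or.inr (conj_flip h2))⟩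
              · exact ⟨Or.inr (Or.inl h2), Or.inr (Or.inl (conj_flip h1))⟩
        · intro y hy
          have hyV : y ∈ Vc := by
            rcases hy with rfl | rfl | rfl
            · exact huV
            · exact hwV
            · exact hVmul huV hwV
          have h1 : a*y*a⁻¹ = y := hCfix a haC y hyV
          have h2 : a⁻¹*y*a = y := by
            have := hCfix a⁻¹ (inv_mem haC) y hyV
            rwa [inv_inv] at this
          rw [h1, h2]
          exact ⟨hy, hy⟩
      | one =>
        intro y hy
        have h1 : (1:G)*y*(1:G)⁻¹ = y := by group
        have h2 : (1:G)⁻¹*y*(1:G) = y := by group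
        rw [h1, h2]
        exact ⟨hy, hy⟩
      | mul a b _ _ pa pb =>
        intro y hy
        constructor
        · have e : (a*b)*y*(a*b)⁻¹ = a*(b*y*b⁻¹)*a⁻¹ := by group
          rw [e]
          exact (pa _ ((pb y hy).1)).1
        · have e : (a*b)⁻¹*y*(a*b) = b⁻¹*(a⁻¹*y*a)*b := by group
          rw [e]
          exact (pb _ ((pa y hy).2)).2
      | inv a _ pa =>
        intro y hy
        constructor
        · have e : a⁻¹*y*(a⁻¹)⁻¹ = a⁻¹*y*a := by group
          rw [e]
          exact (pa y hy).2
        · have e : (a⁻¹)⁻¹*y*a⁻¹ = a*y*a⁻¹ := by group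
          rw [e]
          exact (pa y hy).1
    -- the explicit subgroup of order 4
    refine ⟨quadSubgroup u w huu hww hcomm_uw, ⟨?_⟩, Or.inr ?_⟩
    · intro y hy g
      rcases (mem_quadSubgroup_iff y).mp hy with rfl | hy'
      · have e1 : g*1*g⁻¹ = 1 := by group
        rw [e1]
        exact Subgroup.one_mem _
      · have := (key g y hy').1
        apply (mem_quadSubgroup_iff _).mpr
        rcases this with h|h|h
        · exact Or.inr (Or.inl h)
        · exact Or.inr (Or.inr (Or.inl h))
        · exact Or.inr (Or.inr (Or.inr h))
    · exact card_quadSubgroup hu1 hwne (Ne.symm hwu) huw_ne1 hu_uw hw_uw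
  · -- z ≠ 1 : normal subgroup of order 2
    have hcent : ∀ g : G, g*z = z*g := by
      intro g
      have hsub : Subgroup.closure ({t,s} ∪ (C:Set G)) ≤ Subgroup.centralizer {z} := by
        rw [Subgroup.closure_le]
        rintro a (ha | haC)
        · have ha' : a = t ∨ a = s := by simpa using ha
          rcases ha' with rfl | rfl
          · exact Subgroup.mem_centralizer_singleton_iff.mpr (mul_inv_eq_iff_eq_mul.mp htz)
          · exact Subgroup.mem_centralizer_singleton_iff.mpr (mul_inv_eq_iff_eq_mul.mp hsz)
        · exact Subgroup.mem_centralizer_singleton_iff.mpr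
            (mul_inv_eq_iff_eq_mul.mp (hcz a haC))
      exact Subgroup.mem_centralizer_singleton_iff.mp (hsub (hgen g))
    refine ⟨Subgroup.zpowers z, ⟨?_⟩, Or.inl ?_⟩
    · intro y hy g
      obtain ⟨k, hk⟩ := Subgroup.mem_zpowers_iff.mp hy
      apply Subgroup.mem_zpowers_iff.mpr
      refine ⟨k, ?_⟩
      rw [← hk]
      have hcomm : Commute g z := hcent g
      have h3 : g * z^k = z^k * g := hcomm.zpow_right k
      rw [show g * z^k * g⁻¹ = (g * z^k) * g⁻¹ by group, h3]
      group
    · rw [Nat.card_zpowers]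
      exact orderOf_eq_prime (by rw [pow_two]; exact hzV.2.1) hz1

end Main

/-- Let `n ≥ 2` and let `G` be a group of order `2 ^ n * 3` (so `|G| > 6`). Then `G`
contains a normal subgroup of order `2` or a normal subgroup of order `4`. -/
theorem exists_normal_subgroup_of_order_two_or_four
    (n : ℕ) (hn : 2 ≤ n) (G : Type*) [Group G]
    (hG : Nat.card G = 2 ^ n * 3) :
    ∃ H : Subgroup G, H.Normal ∧ (Nat.card H = 2 ∨ Nat.card H = 4) := by
  classical
  haveI : Finite G := Nat.finite_of_card_ne_zero (by rw [hG]; positivity)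
  haveI hf2 : Fact (Nat.Prime 2) := ⟨Nat.prime_two⟩
  obtain ⟨P⟩ : Nonempty (Sylow 2 G) := inferInstance
  have hfact : (Nat.card G).factorization 2 = n := by
    rw [hG, Nat.factorization_mul (by positivity) (by norm_num)]
    rw [Nat.prime_two.factorization_pow, (by norm_num : Nat.Prime 3).factorization]
    simp [Finsupp.single_apply]
  have hPcard : Nat.card (P : Subgroup G) = 2 ^ n := by
    have := Sylow.card_eq_multiplicity P
    rw [hfact] at this
    exact this
  have hPindex : (P : Subgroup G).index = 3 := by
    have hmul := Subgroup.card_mul_index (P : Subgroup G)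
    rw [hPcard, hG] at hmul
    exact Nat.eq_of_mul_eq_mul_left (pow_pos (by norm_num) n) hmul
  set K := (P : Subgroup G).normalCore with hK
  have hKnormal : K.Normal := Subgroup.normalCore_normal _
  have hKle : K ≤ (P : Subgroup G) := Subgroup.normalCore_le _
  have hKidx : K.index ∣ 6 := by
    rw [hK, Subgroup.normalCore_eq_ker, Subgroup.index_ker]
    haveI := Fintype.ofFinite (G ⧸ (P : Subgroup G))
    have h1 : Nat.card (MulAction.toPermHom G (G ⧸ (P : Subgroup G))).range
        ∣ Nat.card (Equiv.Perm (G ⧸ (P : Subgroup G))) :=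
      Subgroup.card_subgroup_dvd_card _
    have h2 : Nat.card (Equiv.Perm (G ⧸ (P : Subgroup G))) = 6 := by
      rw [Nat.card_eq_fintype_card, Fintype.card_perm]
      have h3 : Fintype.card (G ⧸ (P : Subgroup G)) = 3 := by
        rw [← Nat.card_eq_fintype_card, ← Subgroup.index_eq_card, hPindex]
      rw [h3]
      rfl
    rwa [h2] at h1
  have hK2 : ∃ m, Nat.card K = 2 ^ m := IsPGroup.iff_card.mp (P.isPGroup'.to_le hKle)
  have hKnt : Nat.card K ≠ 1 := by
    intro h1
    have hidx := Subgroup.card_mul_index K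
    rw [h1, one_mul, hG] at hidx
    have hle : K.index ≤ 6 := Nat.le_of_dvd (by norm_num) hKidx
    have h4 : 4 ≤ 2 ^ n := by
      calc (4 : ℕ) = 2 ^ 2 := rfl
        _ ≤ 2 ^ n := Nat.pow_le_pow_right (by norm_num) hn
    omega
  exact aux_main K hKnormal hKnt hK2 hKidx
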